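/- Let z > 0. For f ∈ L²(ℝ³), define (B_z f)(w,x,y) := ∫_{ℝ³} G⁴_z(w − x', w − y', x − w', y − w') f(w', x', y') dw' dx' dy'. Then B_z f ∈ L²(ℝ³) and ‖B_z f‖_{L²} ≤ (2√z)^{-1} ‖f‖_{L²}; that is, the integral operator B_z on L²(ℝ³) with kernel B(w,x,y;w',x',y') = G⁴_z(w − x', w − y', x − w', y − w') is bounded with operator norm at most (2√z)^{-1}. -/

import Mathlib

open MeasureTheory

/-- The four-dimensional Green's function `G⁴_z`, written in coordinates
`(a, b, c, d) ∈ ℝ⁴`. -/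
noncomputable def green4 (z : ℝ) (a b c d : ℝ) : ℝ :=
  ∫ t in Set.Ioi (0 : ℝ),
    (4 * Real.pi * t) ^ (-(2 : ℝ)) *
      Real.exp (-((a ^ 2 + b ^ 2 + c ^ 2 + d ^ 2) / (4 * t)) - z * t)

open Real Set
open scoped ENNReal NNReal

lemma meas_integrand (z : ℝ) : Measurable fun x : (ℝ × ℝ × ℝ × ℝ) × ℝ =>
    (4 * Real.pi * x.2) ^ (-(2 : ℝ)) *
      Real.exp (-((x.1.1 ^ 2 + x.1.2.1 ^ 2 + x.1.2.2.1 ^ 2 + x.1.2.2.2 ^ 2) / (4 * x.2)) - z * x.2) := by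
  fun_prop

lemma green4_measurable (z : ℝ) :
    Measurable fun x : ℝ × ℝ × ℝ × ℝ => green4 z x.1 x.2.1 x.2.2.1 x.2.2.2 :=
  ((meas_integrand z).stronglyMeasurable.integral_prod_right').measurable

lemma green4_nonneg (z a b c d : ℝ) : 0 ≤ green4 z a b c d := by
  apply setIntegral_nonneg measurableSet_Ioi
  intro t ht
  have h : (0:ℝ) < 4 * Real.pi * t := by
    have := mem_Ioi.mp ht; positivity
  exact mul_nonneg (Real.rpow_nonneg h.le _) (Real.exp_pos _).le

lemma green4_ofReal_le (z a b c d : ℝ) :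
    ENNReal.ofReal (green4 z a b c d) ≤
      ∫⁻ t in Ioi (0:ℝ), ENNReal.ofReal ((4 * Real.pi * t) ^ (-(2 : ℝ)) *
        Real.exp (-((a ^ 2 + b ^ 2 + c ^ 2 + d ^ 2) / (4 * t)) - z * t)) := by
  by_cases h : IntegrableOn (fun t : ℝ => (4 * Real.pi * t) ^ (-(2 : ℝ)) *
      Real.exp (-((a ^ 2 + b ^ 2 + c ^ 2 + d ^ 2) / (4 * t)) - z * t)) (Ioi (0:ℝ)) volume
  · rw [green4, ofReal_integral_eq_lintegral_ofReal h]
    refine (ae_restrict_iff' measurableSet_Ioi).2 (Filter.Eventually.of_forall fun t ht => ?_)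
    have h4 : (0:ℝ) < 4 * Real.pi * t := by have := mem_Ioi.mp ht; positivity
    exact mul_nonneg (Real.rpow_nonneg h4.le _) (Real.exp_pos _).le
  · rw [green4, integral_undef h]
    simp

lemma lintegral_gauss {t : ℝ} (ht : 0 < t) (c : ℝ) :
    ∫⁻ x : ℝ, ENNReal.ofReal (Real.exp (-((c - x) ^ 2 / (4 * t)))) =
      ENNReal.ofReal (Real.sqrt (4 * Real.pi * t)) := by
  have hb : (0:ℝ) < (4 * t)⁻¹ := by positivity
  have h1 : Integrable (fun x : ℝ => Real.exp (-(4 * t)⁻¹ * x ^ 2)) := integrable_exp_neg_mul_sq hb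
  have h2 : Integrable (fun x : ℝ => Real.exp (-(4 * t)⁻¹ * (x - c) ^ 2)) := h1.comp_sub_right c
  have heq : ∀ x : ℝ, -((c - x) ^ 2 / (4 * t)) = -(4 * t)⁻¹ * (x - c) ^ 2 := by
    intro x; field_simp; ring
  calc ∫⁻ x : ℝ, ENNReal.ofReal (Real.exp (-((c - x) ^ 2 / (4 * t))))
      = ∫⁻ x : ℝ, ENNReal.ofReal (Real.exp (-(4 * t)⁻¹ * (x - c) ^ 2)) := by
        simp_rw [heq]
    _ = ENNReal.ofReal (∫ x : ℝ, Real.exp (-(4 * t)⁻¹ * (x - c) ^ 2)) :=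
        (ofReal_integral_eq_lintegral_ofReal h2
          (Filter.Eventually.of_forall fun x => (Real.exp_pos _).le)).symm
    _ = ENNReal.ofReal (Real.sqrt (4 * Real.pi * t)) := by
        rw [integral_sub_right_eq_self (fun x : ℝ => Real.exp (-(4 * t)⁻¹ * x ^ 2)) c,
          integral_gaussian]
        congr 1
        rw [div_inv_eq_mul]; ring

lemma lintegral_triple_mul {f g h : ℝ → ℝ≥0∞} (hf : Measurable f) (hg : Measurable g)
    (hh : Measurable h) :
    ∫⁻ p : ℝ × ℝ × ℝ, f p.1 * (g p.2.1 * h p.2.2) =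
      (∫⁻ x, f x) * ((∫⁻ x, g x) * (∫⁻ x, h x)) := by
  rw [MeasureTheory.Measure.volume_eq_prod,
    lintegral_prod_mul (f := f) (g := fun b : ℝ × ℝ => g b.1 * h b.2) hf.aemeasurable
      (by fun_prop),
    MeasureTheory.Measure.volume_eq_prod, lintegral_prod_mul hg.aemeasurable hh.aemeasurable]

lemma schur_gen (z : ℝ) {t : ℝ} (ht : 0 < t) (c1 c2 c3 : ℝ) (E : ℝ × ℝ × ℝ → ℝ)
    (hE : ∀ p, 0 ≤ E p) :
    (∫⁻ p : ℝ × ℝ × ℝ, ENNReal.ofReal ((4 * Real.pi * t) ^ (-(2 : ℝ)) *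
        Real.exp (-(((c1 - p.1) ^ 2 + (c2 - p.2.1) ^ 2 + (c3 - p.2.2) ^ 2 + E p) / (4 * t))
          - z * t)))
      ≤ ENNReal.ofReal ((4 * Real.pi * t) ^ (-(1/2 : ℝ)) * Real.exp (-(z * t))) := by
  have h4 : (0:ℝ) < 4 * Real.pi * t := by positivity
  set A : ℝ := (4 * Real.pi * t) ^ (-(2 : ℝ)) * Real.exp (-(z * t)) with hA
  have hA0 : 0 ≤ A := mul_nonneg (Real.rpow_nonneg h4.le _) (Real.exp_pos _).le
  have hpt : ∀ p : ℝ × ℝ × ℝ,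
      ENNReal.ofReal ((4 * Real.pi * t) ^ (-(2 : ℝ)) *
        Real.exp (-(((c1 - p.1) ^ 2 + (c2 - p.2.1) ^ 2 + (c3 - p.2.2) ^ 2 + E p) / (4 * t))
          - z * t))
      ≤ ENNReal.ofReal A * (ENNReal.ofReal (Real.exp (-((c1 - p.1) ^ 2 / (4 * t)))) *
          (ENNReal.ofReal (Real.exp (-((c2 - p.2.1) ^ 2 / (4 * t)))) *
           ENNReal.ofReal (Real.exp (-((c3 - p.2.2) ^ 2 / (4 * t)))))) := by
    intro p
    rw [← ENNReal.ofReal_mul (Real.exp_pos _).le, ← ENNReal.ofReal_mul (Real.exp_pos _).le,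
      ← ENNReal.ofReal_mul hA0]
    apply ENNReal.ofReal_le_ofReal
    rw [hA, mul_assoc ((4 * Real.pi * t) ^ (-(2:ℝ)))]
    refine mul_le_mul_of_nonneg_left ?_ (Real.rpow_nonneg h4.le _)
    rw [← Real.exp_add, ← Real.exp_add, ← Real.exp_add, Real.exp_le_exp]
    have hEp : 0 ≤ E p / (4 * t) := div_nonneg (hE p) (by positivity)
    have h1 : ((c1 - p.1) ^ 2 + (c2 - p.2.1) ^ 2 + (c3 - p.2.2) ^ 2 + E p) / (4 * t)
        = (c1 - p.1) ^ 2 / (4 * t) + (c2 - p.2.1) ^ 2 / (4 * t) + (c3 - p.2.2) ^ 2 / (4 * t)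
          + E p / (4 * t) := by ring
    rw [h1]
    linarith
  calc (∫⁻ p : ℝ × ℝ × ℝ, ENNReal.ofReal ((4 * Real.pi * t) ^ (-(2 : ℝ)) *
        Real.exp (-(((c1 - p.1) ^ 2 + (c2 - p.2.1) ^ 2 + (c3 - p.2.2) ^ 2 + E p) / (4 * t))
          - z * t)))
      ≤ ∫⁻ p : ℝ × ℝ × ℝ, ENNReal.ofReal A *
          (ENNReal.ofReal (Real.exp (-((c1 - p.1) ^ 2 / (4 * t)))) *
          (ENNReal.ofReal (Real.exp (-((c2 - p.2.1) ^ 2 / (4 * t)))) *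
           ENNReal.ofReal (Real.exp (-((c3 - p.2.2) ^ 2 / (4 * t)))))) := lintegral_mono hpt
    _ = ENNReal.ofReal A * ∫⁻ p : ℝ × ℝ × ℝ,
          (ENNReal.ofReal (Real.exp (-((c1 - p.1) ^ 2 / (4 * t)))) *
          (ENNReal.ofReal (Real.exp (-((c2 - p.2.1) ^ 2 / (4 * t)))) *
           ENNReal.ofReal (Real.exp (-((c3 - p.2.2) ^ 2 / (4 * t)))))) :=
        lintegral_const_mul' _ _ ENNReal.ofReal_ne_top
    _ = ENNReal.ofReal A * (ENNReal.ofReal (Real.sqrt (4 * Real.pi * t)) *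
          (ENNReal.ofReal (Real.sqrt (4 * Real.pi * t)) *
           ENNReal.ofReal (Real.sqrt (4 * Real.pi * t)))) := by
        rw [lintegral_triple_mul
            (f := fun a => ENNReal.ofReal (Real.exp (-((c1 - a) ^ 2 / (4 * t)))))
            (g := fun a => ENNReal.ofReal (Real.exp (-((c2 - a) ^ 2 / (4 * t)))))
            (h := fun a => ENNReal.ofReal (Real.exp (-((c3 - a) ^ 2 / (4 * t)))))
            (by fun_prop) (by fun_prop) (by fun_prop),
          lintegral_gauss ht, lintegral_gauss ht, lintegral_gauss ht]
    _ = ENNReal.ofReal ((4 * Real.pi * t) ^ (-(1/2 : ℝ)) * Real.exp (-(z * t))) := by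
        rw [← ENNReal.ofReal_mul (Real.sqrt_nonneg _), ← ENNReal.ofReal_mul (Real.sqrt_nonneg _),
          ← ENNReal.ofReal_mul hA0]
        congr 1
        rw [hA, Real.sqrt_eq_rpow]
        rw [show (4 * Real.pi * t) ^ (-(2:ℝ)) * Real.exp (-(z*t)) *
            ((4*Real.pi*t) ^ ((1:ℝ)/2) * ((4*Real.pi*t) ^ ((1:ℝ)/2) * (4*Real.pi*t) ^ ((1:ℝ)/2)))
          = (4 * Real.pi * t) ^ (-(2:ℝ)) * (4*Real.pi*t) ^ ((1:ℝ)/2) * (4*Real.pi*t) ^ ((1:ℝ)/2)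
            * (4*Real.pi*t) ^ ((1:ℝ)/2) * Real.exp (-(z*t)) by ring]
        rw [← Real.rpow_add h4, ← Real.rpow_add h4, ← Real.rpow_add h4]
        norm_num

lemma t_int {z : ℝ} (hz : 0 < z) :
    ∫⁻ t in Ioi (0:ℝ), ENNReal.ofReal ((4 * Real.pi * t) ^ (-(1/2 : ℝ)) * Real.exp (-(z * t)))
      = ENNReal.ofReal ((2 * Real.sqrt z)⁻¹) := by
  have hint : IntegrableOn (fun t : ℝ => t ^ (-(1/2) : ℝ) * Real.exp (-(z * t))) (Ioi 0) := by
    have := integrableOn_rpow_mul_exp_neg_mul_rpow (p := 1) (s := -(1/2)) (by norm_num)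
      zero_lt_one hz
    refine this.congr_fun (fun x hx => ?_) measurableSet_Ioi
    dsimp only; rw [Real.rpow_one]; ring_nf
  have hcong : ∫⁻ t in Ioi (0:ℝ),
      ENNReal.ofReal ((4 * Real.pi * t) ^ (-(1/2 : ℝ)) * Real.exp (-(z * t)))
      = ∫⁻ t in Ioi (0:ℝ), ENNReal.ofReal ((4 * Real.pi) ^ (-(1/2 : ℝ)) *
          (t ^ (-(1/2) : ℝ) * Real.exp (-(z * t)))) := by
    refine setLIntegral_congr_fun measurableSet_Ioi (fun t ht => ?_)
    rw [Real.mul_rpow (by positivity) (le_of_lt (mem_Ioi.mp ht)), mul_assoc]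
  rw [hcong, ← ofReal_integral_eq_lintegral_ofReal (hint.const_mul _)
      ((ae_restrict_iff' measurableSet_Ioi).2 (Filter.Eventually.of_forall fun t ht => by
        have h0 := mem_Ioi.mp ht; positivity))]
  rw [MeasureTheory.integral_const_mul]
  have hgamma : ∫ t : ℝ in Ioi 0, t ^ (-(1/2) : ℝ) * Real.exp (-(z * t))
      = (1 / z) ^ ((1:ℝ)/2) * Real.Gamma (1/2) := by
    have := Real.integral_rpow_mul_exp_neg_mul_Ioi (a := 1/2) (by norm_num) hz
    rw [← this]
    refine setIntegral_congr_fun measurableSet_Ioi fun x hx => ?_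
    norm_num
  rw [hgamma, Real.Gamma_one_half_eq]
  congr 1
  have e1 : (4 * Real.pi) ^ (-(1/2) : ℝ) = (Real.sqrt (4 * Real.pi))⁻¹ := by
    rw [Real.rpow_neg (by positivity), Real.sqrt_eq_rpow]
  have e2 : Real.sqrt (4 * Real.pi) = 2 * Real.sqrt Real.pi := by
    rw [show (4:ℝ) * Real.pi = 2 ^ 2 * Real.pi by norm_num,
      Real.sqrt_mul (by positivity), Real.sqrt_sq (by norm_num)]
  have e3 : ((1:ℝ) / z) ^ ((1:ℝ)/2) = (Real.sqrt z)⁻¹ := by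
    rw [← Real.sqrt_eq_rpow, one_div, Real.sqrt_inv]
  rw [e1, e2, e3]
  have hπ : Real.sqrt Real.pi ≠ 0 := ne_of_gt (Real.sqrt_pos.2 Real.pi_pos)
  have hzz : Real.sqrt z ≠ 0 := ne_of_gt (Real.sqrt_pos.2 hz)
  field_simp

lemma schur_p {z : ℝ} (hz : 0 < z) (q : ℝ × ℝ × ℝ) :
    ∫⁻ p : ℝ × ℝ × ℝ,
      ENNReal.ofReal (green4 z (q.1 - p.2.1) (q.1 - p.2.2) (q.2.1 - p.1) (q.2.2 - p.1))
      ≤ ENNReal.ofReal ((2 * Real.sqrt z)⁻¹) := by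
  have hmeas : AEMeasurable (Function.uncurry fun (p : ℝ × ℝ × ℝ) (t : ℝ) =>
      ENNReal.ofReal ((4 * Real.pi * t) ^ (-(2 : ℝ)) *
        Real.exp (-(((q.1 - p.2.1) ^ 2 + (q.1 - p.2.2) ^ 2 + (q.2.1 - p.1) ^ 2
          + (q.2.2 - p.1) ^ 2) / (4 * t)) - z * t)))
      (volume.prod (volume.restrict (Ioi 0))) := by
    apply Measurable.aemeasurable
    apply Measurable.ennreal_ofReal
    fun_prop
  calc ∫⁻ p : ℝ × ℝ × ℝ,
      ENNReal.ofReal (green4 z (q.1 - p.2.1) (q.1 - p.2.2) (q.2.1 - p.1) (q.2.2 - p.1))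
      ≤ ∫⁻ p : ℝ × ℝ × ℝ, ∫⁻ t in Ioi (0:ℝ),
          ENNReal.ofReal ((4 * Real.pi * t) ^ (-(2 : ℝ)) *
            Real.exp (-(((q.1 - p.2.1) ^ 2 + (q.1 - p.2.2) ^ 2 + (q.2.1 - p.1) ^ 2
              + (q.2.2 - p.1) ^ 2) / (4 * t)) - z * t)) :=
        lintegral_mono fun p => green4_ofReal_le z _ _ _ _
    _ = ∫⁻ t in Ioi (0:ℝ), ∫⁻ p : ℝ × ℝ × ℝ,
          ENNReal.ofReal ((4 * Real.pi * t) ^ (-(2 : ℝ)) *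
            Real.exp (-(((q.1 - p.2.1) ^ 2 + (q.1 - p.2.2) ^ 2 + (q.2.1 - p.1) ^ 2
              + (q.2.2 - p.1) ^ 2) / (4 * t)) - z * t)) :=
        lintegral_lintegral_swap hmeas
    _ ≤ ∫⁻ t in Ioi (0:ℝ),
          ENNReal.ofReal ((4 * Real.pi * t) ^ (-(1/2 : ℝ)) * Real.exp (-(z * t))) := by
        refine lintegral_mono_ae ((ae_restrict_iff' measurableSet_Ioi).2
          (Filter.Eventually.of_forall fun t ht => ?_))
        have key := schur_gen z (mem_Ioi.mp ht) q.2.1 q.1 q.1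
          (fun p => (q.2.2 - p.1) ^ 2) (fun p => sq_nonneg _)
        refine le_trans (le_of_eq (lintegral_congr fun p => ?_)) key
        rw [show -(((q.1 - p.2.1) ^ 2 + (q.1 - p.2.2) ^ 2 + (q.2.1 - p.1) ^ 2
              + (q.2.2 - p.1) ^ 2) / (4 * t)) - z * t
            = -(((q.2.1 - p.1) ^ 2 + (q.1 - p.2.1) ^ 2 + (q.1 - p.2.2) ^ 2
              + (q.2.2 - p.1) ^ 2) / (4 * t)) - z * t from by ring]
    _ = ENNReal.ofReal ((2 * Real.sqrt z)⁻¹) := t_int hz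

lemma schur_q {z : ℝ} (hz : 0 < z) (p : ℝ × ℝ × ℝ) :
    ∫⁻ q : ℝ × ℝ × ℝ,
      ENNReal.ofReal (green4 z (q.1 - p.2.1) (q.1 - p.2.2) (q.2.1 - p.1) (q.2.2 - p.1))
      ≤ ENNReal.ofReal ((2 * Real.sqrt z)⁻¹) := by
  have hmeas : AEMeasurable (Function.uncurry fun (q : ℝ × ℝ × ℝ) (t : ℝ) =>
      ENNReal.ofReal ((4 * Real.pi * t) ^ (-(2 : ℝ)) *
        Real.exp (-(((q.1 - p.2.1) ^ 2 + (q.1 - p.2.2) ^ 2 + (q.2.1 - p.1) ^ 2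
          + (q.2.2 - p.1) ^ 2) / (4 * t)) - z * t)))
      (volume.prod (volume.restrict (Ioi 0))) := by
    apply Measurable.aemeasurable
    apply Measurable.ennreal_ofReal
    fun_prop
  calc ∫⁻ q : ℝ × ℝ × ℝ,
      ENNReal.ofReal (green4 z (q.1 - p.2.1) (q.1 - p.2.2) (q.2.1 - p.1) (q.2.2 - p.1))
      ≤ ∫⁻ q : ℝ × ℝ × ℝ, ∫⁻ t in Ioi (0:ℝ),
          ENNReal.ofReal ((4 * Real.pi * t) ^ (-(2 : ℝ)) *
            Real.exp (-(((q.1 - p.2.1) ^ 2 + (q.1 - p.2.2) ^ 2 + (q.2.1 - p.1) ^ 2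
              + (q.2.2 - p.1) ^ 2) / (4 * t)) - z * t)) :=
        lintegral_mono fun q => green4_ofReal_le z _ _ _ _
    _ = ∫⁻ t in Ioi (0:ℝ), ∫⁻ q : ℝ × ℝ × ℝ,
          ENNReal.ofReal ((4 * Real.pi * t) ^ (-(2 : ℝ)) *
            Real.exp (-(((q.1 - p.2.1) ^ 2 + (q.1 - p.2.2) ^ 2 + (q.2.1 - p.1) ^ 2
              + (q.2.2 - p.1) ^ 2) / (4 * t)) - z * t)) :=
        lintegral_lintegral_swap hmeas
    _ ≤ ∫⁻ t in Ioi (0:ℝ),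
          ENNReal.ofReal ((4 * Real.pi * t) ^ (-(1/2 : ℝ)) * Real.exp (-(z * t))) := by
        refine lintegral_mono_ae ((ae_restrict_iff' measurableSet_Ioi).2
          (Filter.Eventually.of_forall fun t ht => ?_))
        have key := schur_gen z (mem_Ioi.mp ht) p.2.1 p.1 p.1
          (fun q => (q.1 - p.2.2) ^ 2) (fun q => sq_nonneg _)
        refine le_trans (le_of_eq (lintegral_congr fun q => ?_)) key
        rw [show -(((q.1 - p.2.1) ^ 2 + (q.1 - p.2.2) ^ 2 + (q.2.1 - p.1) ^ 2
              + (q.2.2 - p.1) ^ 2) / (4 * t)) - z * t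
            = -(((p.2.1 - q.1) ^ 2 + (p.1 - q.2.1) ^ 2 + (p.1 - q.2.2) ^ 2
              + (q.1 - p.2.2) ^ 2) / (4 * t)) - z * t from by ring]
    _ = ENNReal.ofReal ((2 * Real.sqrt z)⁻¹) := t_int hz

set_option maxHeartbeats 2000000 in
theorem B_z_bounded (z : ℝ) (hz : 0 < z) (f : ℝ × ℝ × ℝ → ℝ)
    (hf : MemLp f 2 (volume : Measure (ℝ × ℝ × ℝ))) :
    MemLp (fun q : ℝ × ℝ × ℝ =>
        ∫ p : ℝ × ℝ × ℝ,
          green4 z (q.1 - p.2.1) (q.1 - p.2.2) (q.2.1 - p.1) (q.2.2 - p.1) * f p)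
      2 (volume : Measure (ℝ × ℝ × ℝ)) ∧
    (∫ q : ℝ × ℝ × ℝ,
        (∫ p : ℝ × ℝ × ℝ,
          green4 z (q.1 - p.2.1) (q.1 - p.2.2) (q.2.1 - p.1) (q.2.2 - p.1) * f p) ^ 2) ^
        ((1 : ℝ) / 2)
      ≤ (2 * Real.sqrt z)⁻¹ * (∫ p : ℝ × ℝ × ℝ, (f p) ^ 2) ^ ((1 : ℝ) / 2) := by
  set C : ℝ := (2 * Real.sqrt z)⁻¹ with hC
  have hC0 : (0:ℝ) ≤ C := by positivity
  set K : ℝ × ℝ × ℝ → ℝ × ℝ × ℝ → ℝ := fun q p =>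
    green4 z (q.1 - p.2.1) (q.1 - p.2.2) (q.2.1 - p.1) (q.2.2 - p.1) with hKdef
  have hKm : Measurable fun x : (ℝ × ℝ × ℝ) × (ℝ × ℝ × ℝ) => K x.1 x.2 := by
    have h1 : Measurable fun x : (ℝ × ℝ × ℝ) × (ℝ × ℝ × ℝ) =>
        ((x.1.1 - x.2.2.1, x.1.1 - x.2.2.2, x.1.2.1 - x.2.1, x.1.2.2 - x.2.1) :
          ℝ × ℝ × ℝ × ℝ) := by fun_prop
    have h2 := (green4_measurable z).comp h1
    exact h2
  have hKnn : ∀ q p, 0 ≤ K q p := fun q p => green4_nonneg _ _ _ _ _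
  set F : ℝ × ℝ × ℝ → ℝ := fun q => ∫ p, K q p * f p with hFdef
  have hfm := hf.aestronglyMeasurable
  have hFm : AEStronglyMeasurable F (volume : Measure (ℝ × ℝ × ℝ)) :=
    (hKm.aestronglyMeasurable.mul
      (hfm.comp_quasiMeasurePreserving MeasureTheory.Measure.quasiMeasurePreserving_snd)).integral_prod_right'
  have hκm : Measurable fun x : (ℝ × ℝ × ℝ) × (ℝ × ℝ × ℝ) => ENNReal.ofReal (K x.1 x.2) :=
    hKm.ennreal_ofReal
  have hgae : AEMeasurable (fun p : ℝ × ℝ × ℝ => (‖f p‖₊ : ℝ≥0∞)) volume := hfm.enorm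
  -- the squared-norm ENNReal integrals
  set B : ℝ≥0∞ := ∫⁻ p : ℝ × ℝ × ℝ, (‖f p‖₊ : ℝ≥0∞) ^ (2:ℕ) with hBdef
  have hfB : eLpNorm f 2 volume = B ^ ((1:ℝ)/2) := by
    rw [eLpNorm_eq_lintegral_rpow_enorm_toReal two_ne_zero ENNReal.ofNat_ne_top]
    norm_num [hBdef, enorm_eq_nnnorm]
  have hBlt : B < ⊤ := by
    have h2 := hf.2
    rw [hfB] at h2
    exact (ENNReal.rpow_lt_top_iff_of_pos (by norm_num)).1 h2
  -- pointwise Cauchy–Schwarz + Schur bound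
  have hpt : ∀ q : ℝ × ℝ × ℝ, (‖F q‖₊ : ℝ≥0∞) ^ (2:ℕ) ≤
      ENNReal.ofReal C * ∫⁻ p, ENNReal.ofReal (K q p) * (‖f p‖₊ : ℝ≥0∞) ^ (2:ℕ) := by
    intro q
    have hκq : AEMeasurable (fun p => ENNReal.ofReal (K q p)) volume :=
      (hκm.comp measurable_prodMk_left).aemeasurable
    have h1 : (‖F q‖₊ : ℝ≥0∞) ≤ ∫⁻ p, ENNReal.ofReal (K q p) * (‖f p‖₊ : ℝ≥0∞) := by
      refine le_trans (enorm_integral_le_lintegral_enorm _)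
        (le_of_eq (lintegral_congr fun p => ?_))
      rw [enorm_mul, Real.enorm_eq_ofReal (hKnn q p), enorm_eq_nnnorm]
    have hconj : Real.HolderConjugate 2 2 := Real.HolderConjugate.two_two
    have hCS := ENNReal.lintegral_mul_le_Lp_mul_Lq volume hconj
      (f := fun p => (ENNReal.ofReal (K q p)) ^ ((1:ℝ)/2))
      (g := fun p => (ENNReal.ofReal (K q p)) ^ ((1:ℝ)/2) * (‖f p‖₊ : ℝ≥0∞))
      (hκq.pow_const _) ((hκq.pow_const _).mul hgae)
    have hsplit : ∀ p : ℝ × ℝ × ℝ, ENNReal.ofReal (K q p) * (‖f p‖₊ : ℝ≥0∞)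
        = ((fun p => (ENNReal.ofReal (K q p)) ^ ((1:ℝ)/2)) *
           (fun p => (ENNReal.ofReal (K q p)) ^ ((1:ℝ)/2) * (‖f p‖₊ : ℝ≥0∞))) p := by
      intro p
      simp only [Pi.mul_apply]
      rw [← mul_assoc, ← ENNReal.rpow_add_of_nonneg _ _ (by norm_num) (by norm_num)]
      norm_num
    have hsq1 : ∀ p : ℝ × ℝ × ℝ, ((ENNReal.ofReal (K q p)) ^ ((1:ℝ)/2)) ^ (2:ℝ)
        = ENNReal.ofReal (K q p) := by
      intro p
      rw [← ENNReal.rpow_mul]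
      norm_num
    have hsq2 : ∀ p : ℝ × ℝ × ℝ,
        ((ENNReal.ofReal (K q p)) ^ ((1:ℝ)/2) * (‖f p‖₊ : ℝ≥0∞)) ^ (2:ℝ)
        = ENNReal.ofReal (K q p) * (‖f p‖₊ : ℝ≥0∞) ^ (2:ℕ) := by
      intro p
      rw [ENNReal.mul_rpow_of_nonneg _ _ (by norm_num), ← ENNReal.rpow_mul]
      norm_num
    have h2 : (‖F q‖₊ : ℝ≥0∞) ≤ (∫⁻ p, ENNReal.ofReal (K q p)) ^ ((1:ℝ)/2) *
        (∫⁻ p, ENNReal.ofReal (K q p) * (‖f p‖₊ : ℝ≥0∞) ^ (2:ℕ)) ^ ((1:ℝ)/2) := by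
      refine le_trans h1 ?_
      calc ∫⁻ p, ENNReal.ofReal (K q p) * (‖f p‖₊ : ℝ≥0∞)
          = ∫⁻ p, ((fun p => (ENNReal.ofReal (K q p)) ^ ((1:ℝ)/2)) *
              (fun p => (ENNReal.ofReal (K q p)) ^ ((1:ℝ)/2) * (‖f p‖₊ : ℝ≥0∞))) p :=
            lintegral_congr hsplit
        _ ≤ (∫⁻ p, ((ENNReal.ofReal (K q p)) ^ ((1:ℝ)/2)) ^ (2:ℝ)) ^ ((1:ℝ)/2) *
            (∫⁻ p, ((ENNReal.ofReal (K q p)) ^ ((1:ℝ)/2) * (‖f p‖₊ : ℝ≥0∞)) ^ (2:ℝ))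
              ^ ((1:ℝ)/2) := by
            exact hCS
        _ = (∫⁻ p, ENNReal.ofReal (K q p)) ^ ((1:ℝ)/2) *
            (∫⁻ p, ENNReal.ofReal (K q p) * (‖f p‖₊ : ℝ≥0∞) ^ (2:ℕ)) ^ ((1:ℝ)/2) := by
            rw [lintegral_congr hsq1, lintegral_congr hsq2]
    have h3 : (‖F q‖₊ : ℝ≥0∞) ^ (2:ℕ) ≤ (∫⁻ p, ENNReal.ofReal (K q p)) *
        (∫⁻ p, ENNReal.ofReal (K q p) * (‖f p‖₊ : ℝ≥0∞) ^ (2:ℕ)) := by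
      refine le_trans (pow_le_pow_left' h2 2) (le_of_eq ?_)
      rw [mul_pow, ← ENNReal.rpow_natCast (_ ^ ((1:ℝ)/2)), ← ENNReal.rpow_mul,
        ← ENNReal.rpow_natCast (_ ^ ((1:ℝ)/2)), ← ENNReal.rpow_mul]
      norm_num
    refine le_trans h3 ?_
    exact mul_le_mul_left (schur_p hz q) _
  -- joint measurability for the swap
  have hjoint : AEMeasurable (Function.uncurry fun (q p : ℝ × ℝ × ℝ) =>
      ENNReal.ofReal (K q p) * (‖f p‖₊ : ℝ≥0∞) ^ (2:ℕ))
      ((volume : Measure (ℝ × ℝ × ℝ)).prod (volume : Measure (ℝ × ℝ × ℝ))) := by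
    exact hκm.aemeasurable.mul
      (((hgae.comp_quasiMeasurePreserving MeasureTheory.Measure.quasiMeasurePreserving_snd).pow_const 2))
  -- main ENNReal estimate
  have main : (∫⁻ q : ℝ × ℝ × ℝ, (‖F q‖₊ : ℝ≥0∞) ^ (2:ℕ)) ≤
      (ENNReal.ofReal C) ^ (2:ℕ) * B := by
    calc (∫⁻ q : ℝ × ℝ × ℝ, (‖F q‖₊ : ℝ≥0∞) ^ (2:ℕ))
        ≤ ∫⁻ q : ℝ × ℝ × ℝ, ENNReal.ofReal C *
            ∫⁻ p, ENNReal.ofReal (K q p) * (‖f p‖₊ : ℝ≥0∞) ^ (2:ℕ) := lintegral_mono hpt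
      _ = ENNReal.ofReal C * ∫⁻ q : ℝ × ℝ × ℝ,
            ∫⁻ p, ENNReal.ofReal (K q p) * (‖f p‖₊ : ℝ≥0∞) ^ (2:ℕ) :=
          lintegral_const_mul' _ _ ENNReal.ofReal_ne_top
      _ = ENNReal.ofReal C * ∫⁻ p : ℝ × ℝ × ℝ,
            ∫⁻ q, ENNReal.ofReal (K q p) * (‖f p‖₊ : ℝ≥0∞) ^ (2:ℕ) := by
          rw [lintegral_lintegral_swap hjoint]
      _ = ENNReal.ofReal C * ∫⁻ p : ℝ × ℝ × ℝ,
            (∫⁻ q, ENNReal.ofReal (K q p)) * (‖f p‖₊ : ℝ≥0∞) ^ (2:ℕ) := by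
          congr 1
          exact lintegral_congr fun p =>
            lintegral_mul_const' _ _ (ENNReal.pow_ne_top ENNReal.coe_ne_top)
      _ ≤ ENNReal.ofReal C * ∫⁻ p : ℝ × ℝ × ℝ,
            ENNReal.ofReal C * (‖f p‖₊ : ℝ≥0∞) ^ (2:ℕ) := by
          refine mul_le_mul_right (lintegral_mono fun p => ?_) _
          exact mul_le_mul_left (schur_q hz p) _
      _ = (ENNReal.ofReal C) ^ (2:ℕ) * B := by
          rw [lintegral_const_mul' _ _ ENNReal.ofReal_ne_top, ← mul_assoc, ← pow_two]
  -- Memℒp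
  have hMem : MemLp F 2 (volume : Measure (ℝ × ℝ × ℝ)) := by
    refine ⟨hFm, ?_⟩
    rw [eLpNorm_eq_lintegral_rpow_enorm_toReal two_ne_zero ENNReal.ofNat_ne_top]
    have heq : (∫⁻ q : ℝ × ℝ × ℝ, (‖F q‖₊ : ℝ≥0∞) ^ (ENNReal.toReal 2))
        = ∫⁻ q : ℝ × ℝ × ℝ, (‖F q‖₊ : ℝ≥0∞) ^ (2:ℕ) := by
      refine lintegral_congr fun q => ?_
      rw [← ENNReal.rpow_natCast]
      norm_num
    simp only [enorm_eq_nnnorm]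
    rw [heq]
    refine (ENNReal.rpow_lt_top_iff_of_pos (by norm_num)).2 ?_
    exact lt_of_le_of_lt main (ENNReal.mul_lt_top
      (ENNReal.pow_ne_top ENNReal.ofReal_ne_top).lt_top hBlt)
  refine ⟨hMem, ?_⟩
  -- convert to real integrals
  have eF : (∫ q : ℝ × ℝ × ℝ, (F q) ^ 2)
      = (∫⁻ q : ℝ × ℝ × ℝ, (‖F q‖₊ : ℝ≥0∞) ^ (2:ℕ)).toReal := by
    rw [integral_eq_lintegral_of_nonneg_ae (Filter.Eventually.of_forall fun q => sq_nonneg _)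
      (hFm.pow 2)]
    congr 1
    refine lintegral_congr fun q => ?_
    rw [← sq_abs, ENNReal.ofReal_pow (abs_nonneg _), ← Real.enorm_eq_ofReal_abs, enorm_eq_nnnorm]
  have ef : (∫ p : ℝ × ℝ × ℝ, (f p) ^ 2) = B.toReal := by
    rw [integral_eq_lintegral_of_nonneg_ae (Filter.Eventually.of_forall fun p => sq_nonneg _)
      (hfm.pow 2), hBdef]
    congr 1
    refine lintegral_congr fun p => ?_
    rw [← sq_abs, ENNReal.ofReal_pow (abs_nonneg _), ← Real.enorm_eq_ofReal_abs, enorm_eq_nnnorm]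
  show (∫ q : ℝ × ℝ × ℝ, (F q) ^ 2) ^ ((1:ℝ)/2) ≤ C * (∫ p : ℝ × ℝ × ℝ, (f p) ^ 2) ^ ((1:ℝ)/2)
  rw [eF, ef]
  have htr : (∫⁻ q : ℝ × ℝ × ℝ, (‖F q‖₊ : ℝ≥0∞) ^ (2:ℕ)).toReal ≤ C ^ 2 * B.toReal := by
    refine le_trans (ENNReal.toReal_mono ?_ main) ?_
    · exact ENNReal.mul_ne_top (ENNReal.pow_ne_top ENNReal.ofReal_ne_top) hBlt.ne
    · rw [ENNReal.toReal_mul, ENNReal.toReal_pow, ENNReal.toReal_ofReal hC0]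
  calc ((∫⁻ q : ℝ × ℝ × ℝ, (‖F q‖₊ : ℝ≥0∞) ^ (2:ℕ)).toReal) ^ ((1:ℝ)/2)
      ≤ (C ^ 2 * B.toReal) ^ ((1:ℝ)/2) :=
        Real.rpow_le_rpow ENNReal.toReal_nonneg htr (by norm_num)
    _ = C * B.toReal ^ ((1:ℝ)/2) := by
        rw [Real.mul_rpow (sq_nonneg _) ENNReal.toReal_nonneg, ← Real.rpow_natCast C 2,
          ← Real.rpow_mul hC0]
        norm_num
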